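/- Let G be a graph and M = M[IAS(G)]. Then for every X ⊆ V, the rank of τ_G(X) in M equals |X| + c_G(X), and the connectivity function satisfies λ(τ_G(X)) = 2·c_G(X). -/

import Mathlib

open scoped ENat

variable {V : Type*} [Fintype V] [DecidableEq V]

/-- The column of the matrix `IAS(G) = (I | A | A+I)` indexed by `(v, i)`:
`i = 0` gives `φ(v)` (identity column), `i = 1` gives `χ(v)` (column of `A`),
`i = 2` gives `ψ(v)` (column of `A + I`). -/
def iasCol (A : Matrix V V (ZMod 2)) : V × Fin 3 → V → ZMod 2 :=
  fun p w =>
    if p.2 = 0 then (if w = p.1 then 1 else 0)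
    else if p.2 = 1 then A w p.1
    else A w p.1 + (if w = p.1 then 1 else 0)

/-- The rank of a subset of the ground set `W(G) = V × Fin 3` of the isotropic
matroid: the GF(2)-rank of the corresponding set of columns. -/
noncomputable def iasRank (A : Matrix V V (ZMod 2)) (S : Set (V × Fin 3)) : ℕ :=
  Module.finrank (ZMod 2) (Submodule.span (ZMod 2) (iasCol A '' S))

/-- The connectivity function `λ(S) = r(S) + r(W - S) - r(M)`. -/
noncomputable def iasLambda (A : Matrix V V (ZMod 2)) (S : Set (V × Fin 3)) : ℕ :=
  iasRank A S + iasRank A Sᶜ - iasRank A Set.univ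

/-- Independence in the isotropic matroid. -/
def iasIndep (A : Matrix V V (ZMod 2)) (S : Set (V × Fin 3)) : Prop :=
  LinearIndependent (ZMod 2) (fun s : S => iasCol A s.1)

/-- Circuits of the isotropic matroid: minimal dependent sets. -/
def iasCircuit (A : Matrix V V (ZMod 2)) (C : Set (V × Fin 3)) : Prop :=
  ¬ iasIndep A C ∧ ∀ S ⊂ C, iasIndep A S

/-- An ordinary `k`-separation: `λ(S) < k` and `|S|, |W - S| ≥ k`. -/
def OrdinarySep (A : Matrix V V (ZMod 2)) (k : ℕ) (S : Set (V × Fin 3)) : Prop :=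
  0 < k ∧ iasLambda A S < k ∧ k ≤ S.ncard ∧ k ≤ Sᶜ.ncard

/-- A cyclic `k`-separation: `λ(S) < k` and both `S` and `W - S` are dependent. -/
def CyclicSep (A : Matrix V V (ZMod 2)) (k : ℕ) (S : Set (V × Fin 3)) : Prop :=
  0 < k ∧ iasLambda A S < k ∧ ¬ iasIndep A S ∧ ¬ iasIndep A Sᶜ

/-- A vertical `k`-separation: `λ(S) < k` and `r(S), r(W - S) ≥ k`. -/
def VerticalSep (A : Matrix V V (ZMod 2)) (k : ℕ) (S : Set (V × Fin 3)) : Prop :=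
  0 < k ∧ iasLambda A S < k ∧ k ≤ iasRank A S ∧ k ≤ iasRank A Sᶜ

/-- `τ(M) = min {k : M has an ordinary k-separation}`, with `min ∅ = ∞`. -/
noncomputable def iasTau (A : Matrix V V (ZMod 2)) : ℕ∞ :=
  sInf {k : ℕ∞ | ∃ m : ℕ, (m : ℕ∞) = k ∧ ∃ S, OrdinarySep A m S}

/-- `κ*(M) = min ({k : M has a cyclic k-separation} ∪ {|W| - r(M)})`. -/
noncomputable def iasKappaStar (A : Matrix V V (ZMod 2)) : ℕ :=
  sInf ({k : ℕ | ∃ S, CyclicSep A k S} ∪ {3 * Fintype.card V - iasRank A Set.univ})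

/-- `κ(M) = min ({k : M has a vertical k-separation} ∪ {r(M)})`. -/
noncomputable def iasKappa (A : Matrix V V (ZMod 2)) : ℕ :=
  sInf ({k : ℕ | ∃ S, VerticalSep A k S} ∪ {iasRank A Set.univ})

/-- The simple graph underlying a looped simple graph given by its adjacency matrix. -/
def toSimpleGraph (A : Matrix V V (ZMod 2)) : SimpleGraph V where
  Adj v w := v ≠ w ∧ A v w = 1 ∧ A w v = 1
  symm := ⟨fun v w ⟨h1, h2, h3⟩ => ⟨Ne.symm h1, h3, h2⟩⟩
  loopless := ⟨fun v h => h.1 rfl⟩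

/-- The open neighborhood `N_G(v)`. -/
def nbhd (A : Matrix V V (ZMod 2)) (v : V) : Set V := {u | u ≠ v ∧ A v u = 1}

/-- `v` is a pendant vertex: `N_G(v) = {w}` for some `w`. -/
def IsPendant (A : Matrix V V (ZMod 2)) (v : V) : Prop := ∃ w, nbhd A v = {w}

/-- `G` has a pair of twin vertices: `v ≠ w` with `N_G(v) - {w} = N_G(w) - {v}`. -/
def HasTwins (A : Matrix V V (ZMod 2)) : Prop :=
  ∃ v w, v ≠ w ∧ nbhd A v \ {w} = nbhd A w \ {v}

/-- The cut-rank `c_G(X)`: the GF(2)-rank of the submatrix `A[V - X, X]`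
(columns indexed by `X`, rows indexed by `V - X`). -/
noncomputable def cutRank (A : Matrix V V (ZMod 2)) (X : Set V) : ℕ :=
  Module.finrank (ZMod 2)
    (Submodule.span (ZMod 2) ((fun x : V => fun w : ↥(Xᶜ) => A w.1 x) '' X))

/-- `τ_G(X) = ⋃_{x ∈ X} τ_G(x)`, the union of the vertex triples of members of `X`. -/
def tauSet (X : Set V) : Set (V × Fin 3) := {p | p.1 ∈ X}

/-- Loop complementation at `v`. -/
def loopComp (A : Matrix V V (ZMod 2)) (v : V) : Matrix V V (ZMod 2) :=
  fun x y => A x y + if x = v ∧ y = v then 1 else 0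

/-- Simple local complementation at `v`. -/
def simpleLocalComp (A : Matrix V V (ZMod 2)) (v : V) : Matrix V V (ZMod 2) :=
  fun x y => A x y +
    if x ≠ y ∧ (x ≠ v ∧ A v x = 1) ∧ (y ≠ v ∧ A v y = 1) then 1 else 0

/-- Non-simple local complementation at `v`. -/
def nonSimpleLocalComp (A : Matrix V V (ZMod 2)) (v : V) : Matrix V V (ZMod 2) :=
  fun x y => simpleLocalComp A v x y + if x = y ∧ x ≠ v ∧ A v x = 1 then 1 else 0

/-- One local move. -/
def LocalStep (A B : Matrix V V (ZMod 2)) : Prop :=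
  ∃ v, B = loopComp A v ∨ B = simpleLocalComp A v ∨ B = nonSimpleLocalComp A v

/-- Local equivalence: a finite sequence of loop complementations and
(simple or non-simple) local complementations. -/
def LocallyEquiv (A B : Matrix V V (ZMod 2)) : Prop :=
  Relation.ReflTransGen LocalStep A B

/-- `G` has a split: a bipartition `(V₁, V₂)` of `V` with `|V₁|, |V₂| ≥ 2` such that the
GF(2)-rank of `A[V₁, V₂]` is at most 1. -/
def HasSplit (A : Matrix V V (ZMod 2)) : Prop :=
  ∃ X : Set V, 2 ≤ X.ncard ∧ 2 ≤ Xᶜ.ncard ∧ cutRank A X ≤ 1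

/-- A transverse circuit: a circuit of the isotropic matroid meeting each
vertex triple at most once. -/
def IsTransverseCircuit (A : Matrix V V (ZMod 2)) (C : Set (V × Fin 3)) : Prop :=
  iasCircuit A C ∧ ∀ p ∈ C, ∀ q ∈ C, p.1 = q.1 → p = q

/-- An isotropic `k`-separation of `G`: `|X|, |V - X| ≥ k` and `c_G(X) < k`. -/
def IsotropicSep (A : Matrix V V (ZMod 2)) (k : ℕ) (X : Set V) : Prop :=
  k ≤ X.ncard ∧ k ≤ Xᶜ.ncard ∧ cutRank A X < k

/-- The isotropic connectivity `κ_B(G)`, with `min ∅ = ∞`. -/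
noncomputable def kappaB (A : Matrix V V (ZMod 2)) : ℕ∞ :=
  sInf {j : ℕ∞ | ∃ k : ℕ, (k : ℕ∞) = j ∧ ∃ X, IsotropicSep A k X}

/-- The 5-cycle `C₅`. -/
def C5mat : Matrix (Fin 5) (Fin 5) (ZMod 2) :=
  fun i j => if (i.val + 1) % 5 = j.val ∨ (j.val + 1) % 5 = i.val then 1 else 0

/-- The wheel `W₅` : a 5-cycle on `{0,…,4}` plus a hub `5` adjacent to all. -/
def W5mat : Matrix (Fin 6) (Fin 6) (ZMod 2) :=
  fun i j =>
    if (i.val = 5 ∧ j.val ≠ 5) ∨ (j.val = 5 ∧ i.val ≠ 5) then 1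
    else if i.val ≠ 5 ∧ j.val ≠ 5 ∧ ((i.val + 1) % 5 = j.val ∨ (j.val + 1) % 5 = i.val) then 1
    else 0

/-! The columns of `τ_G(X)` span `⟨e_x : x ∈ X⟩ + ⟨A e_x : x ∈ X⟩`. Restricting vectors to the
coordinates in `V - X` kills exactly `⟨e_x : x ∈ X⟩` on this span and maps it onto the column
space of `A[V - X, X]`, so rank–nullity gives `r(τ_G(X)) = |X| + c_G(X)`. Since `A` is symmetric,
`c_G(V - X) = c_G(X)`, and with `r(M) = |V|` this yields `λ(τ_G(X)) = 2 c_G(X)`. -/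

open Module Submodule

theorem Submodule.finrank_eq_finrank_ker_add_finrank_map {K M N : Type*} [DivisionRing K]
    [AddCommGroup M] [Module K M] [AddCommGroup N] [Module K N] [FiniteDimensional K M]
    (f : M →ₗ[K] N) {P : Submodule K M} (hP : LinearMap.ker f ≤ P) :
    finrank K P = finrank K (LinearMap.ker f) + finrank K (P.map f) := by
  rw [← (f.domRestrict P).finrank_range_add_finrank_ker, LinearMap.range_domRestrict,
    LinearMap.ker_domRestrict, (comapSubtypeEquivOfLe hP).finrank_eq, add_comm]

theorem Pi.ker_funLeft_subtype_compl (K : Type*) [Semiring K] {ι : Type*} [Finite ι]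
    (X : Set ι) :
    LinearMap.ker (LinearMap.funLeft K K (Subtype.val : ↥Xᶜ → ι)) = Pi.spanSubset K X := by
  ext g
  simp only [LinearMap.mem_ker, Pi.mem_spanSubset_iff, funext_iff, Subtype.forall]
  rfl

theorem cutRank_univ {ι : Type*} (A : Matrix ι ι (ZMod 2)) : cutRank A Set.univ = 0 :=
  haveI : IsEmpty ↥(Set.univ : Set ι)ᶜ := ⟨fun w => w.2 trivial⟩
  finrank_zero_of_subsingleton

theorem cutRank_eq_rank_submatrix {ι : Type*} (A : Matrix ι ι (ZMod 2)) (X : Set ι)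
    [Fintype ↥X] :
    cutRank A X = (A.submatrix (Subtype.val : ↥Xᶜ → ι) (Subtype.val : ↥X → ι)).rank := by
  rw [cutRank, Matrix.rank_eq_finrank_span_cols, Set.image_eq_range]
  rfl

theorem cutRank_compl {ι : Type*} [Finite ι] (A : Matrix ι ι (ZMod 2)) (hA : A.IsSymm)
    (X : Set ι) : cutRank A Xᶜ = cutRank A X := by
  have := Fintype.ofFinite ι
  classical
  rw [cutRank_eq_rank_submatrix A Xᶜ, cutRank_eq_rank_submatrix A X, ← Matrix.rank_transpose,
    Matrix.transpose_submatrix, hA.eq]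
  exact Matrix.rank_submatrix (A.submatrix Subtype.val Subtype.val) (Equiv.refl _)
    (Equiv.setCongr (compl_compl X))

theorem compl_tauSet {ι : Type*} (X : Set ι) : (tauSet X)ᶜ = tauSet Xᶜ := rfl

section Isotropic

variable (A : Matrix V V (ZMod 2))

theorem span_iasCol_tauSet (X : Set V) :
    span (ZMod 2) (iasCol A '' tauSet X) =
      Pi.spanSubset (ZMod 2) X ⊔ span (ZMod 2) (A.col '' X) := by
  have hφ (v : V) : iasCol A (v, 0) = Pi.single v 1 := by ext; simp [iasCol, Pi.single_apply]
  have hχ (v : V) : iasCol A (v, 1) = A.col v := by ext; simp [iasCol]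
  have hψ (v : V) : iasCol A (v, 2) = A.col v + Pi.single v 1 := by
    ext; simp [iasCol, Pi.single_apply]
  have hφX : ∀ v ∈ X, Pi.single v 1 ∈ Pi.spanSubset (ZMod 2) X := fun v hv =>
    subset_span ⟨v, hv, by simp⟩
  have hχX : ∀ v ∈ X, A.col v ∈ span (ZMod 2) (A.col '' X) := fun v hv =>
    subset_span ⟨v, hv, rfl⟩
  apply le_antisymm
  · rw [span_le]
    rintro _ ⟨⟨v, i⟩, hv, rfl⟩
    fin_cases i
    · exact mem_sup_left (hφ v ▸ hφX v hv)
    · exact mem_sup_right (hχ v ▸ hχX v hv)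
    · exact hψ v ▸ add_mem (mem_sup_right (hχX v hv)) (mem_sup_left (hφX v hv))
  · refine sup_le (span_le.mpr ?_) (span_le.mpr ?_) <;> rintro _ ⟨v, hv, rfl⟩
    · exact subset_span ⟨(v, 0), hv, by simp [hφ]⟩
    · exact subset_span ⟨(v, 1), hv, hχ v⟩

theorem iasRank_tauSet (X : Set V) : iasRank A (tauSet X) = X.ncard + cutRank A X := by
  set π := LinearMap.funLeft (ZMod 2) (ZMod 2) (Subtype.val : ↥Xᶜ → V)
  have hker : LinearMap.ker π = Pi.spanSubset (ZMod 2) X := Pi.ker_funLeft_subtype_compl _ X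
  rw [iasRank, span_iasCol_tauSet,
    finrank_eq_finrank_ker_add_finrank_map π (hker ▸ le_sup_left), hker, Pi.dim_spanSubset,
    Submodule.map_sup, ← hker, LinearMap.le_ker_iff_map.mp le_rfl, bot_sup_eq, map_span,
    ← Set.image_comp]
  rfl

theorem iasRank_univ : iasRank A Set.univ = Fintype.card V := by
  have h := iasRank_tauSet A Set.univ
  rwa [cutRank_univ, Set.ncard_univ, Nat.card_eq_fintype_card, add_zero] at h

end Isotropic

theorem stmt3 (A : Matrix V V (ZMod 2)) (hA : A.IsSymm) :
    ∀ X : Set V,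
      iasRank A (tauSet X) = X.ncard + cutRank A X ∧
      iasLambda A (tauSet X) = 2 * cutRank A X := by
  intro X
  refine ⟨iasRank_tauSet A X, ?_⟩
  have hcard : X.ncard + Xᶜ.ncard = Fintype.card V := by
    rw [Set.ncard_add_ncard_compl, Nat.card_eq_fintype_card]
  rw [iasLambda, compl_tauSet, iasRank_tauSet, iasRank_tauSet, iasRank_univ, cutRank_compl A hA]
  omega
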